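/- Let h_c, h_r be independent Gamma(m,m) random variables with m a positive integer, and let positive constants P_c, P_r, a₁, a₂, a₃, a₄, a₅, γ_SIC, γ_th be given. Then the joint probability P( P_c h_c/(P_r a₃ h_r + a₁ + a₂) > γ_SIC and P_r h_r/(a₄ + a₅) > γ_th ) equals Σ_{p=0}^{m−1} Σ_{r=0}^{p} C(p,r) · (a₁+a₂)^{p−r}(a₃P_r)^r/(Γ(m) m^r p!) · (m γ_SIC/P_c)^p · exp(−m γ_SIC(a₁+a₂)/P_c) · (γ_SIC a₃ P_r/P_c + 1)^{−(r+m)} · Γ(r+m, (γ_th m(a₄+a₅)/P_r)·(γ_SIC a₃ P_r/P_c + 1)). -/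

import Mathlib

/-!
Write `α = γSIC a3 Pr / Pc`, `β = γSIC (a1 + a2) / Pc` and `T = γth (a4 + a5) / Pr`; the event is
`hr > T ∧ hc > α hr + β`. By independence and Fubini its probability is the integral over `y > T` of
the density of `hr` times the tail of `hc` at `α y + β`. For integer `m` the Gamma(m, m) tail is the
Erlang sum `P(hc > s) = e^{-ms} ∑_{p<m} (ms)^p / p!` (`s ≥ 0`). Expanding `(α y + β)^p` binomially
leaves integrals of `y^{r+m-1} e^{-m(1+α)y}` over `(T, ∞)`, which the substitution `u = m(1+α)y`
turns into the upper incomplete Gamma values `Γ(r+m, m(1+α)T)`.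
-/

open MeasureTheory ProbabilityTheory Set

/-- Nakagami-m power-gain density (Gamma with shape m, rate m), m a positive integer. -/
noncomputable def nakDensity (m : ℕ) (x : ℝ) : ℝ :=
  if 0 < x then (m : ℝ) ^ m / Real.Gamma m * x ^ (m - 1) * Real.exp (-(m * x)) else 0

open Filter Real

lemma integrableOn_pow_mul_exp_neg_mul_Ioi (n : ℕ) {A : ℝ} (hA : 0 < A) (T : ℝ) :
    IntegrableOn (fun y : ℝ => y ^ n * exp (-(A * y))) (Ioi T) := by
  refine integrable_of_isBigO_exp_neg (half_pos hA) (by fun_prop) ?_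
  have hpow := (isLittleO_pow_exp_pos_mul_atTop n (half_pos hA)).isBigO.mul
    (Asymptotics.isBigO_refl (fun y : ℝ => exp (-(A * y))) atTop)
  refine hpow.congr_right fun y => ?_
  rw [← exp_add]
  ring_nf

lemma hasDerivAt_neg_exp_neg_mul_sum (n : ℕ) (x : ℝ) :
    HasDerivAt (fun x => -(exp (-x) * ∑ k ∈ Finset.range (n + 1),
      (n.factorial / k.factorial : ℝ) * x ^ k)) (x ^ n * exp (-x)) x := by
  have hsum := HasDerivAt.fun_sum (u := Finset.range (n + 1)) fun k _ =>
    (hasDerivAt_pow k x).const_mul (n.factorial / k.factorial : ℝ)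
  have hderiv : ∑ k ∈ Finset.range (n + 1), (n.factorial / k.factorial : ℝ) * (k * x ^ (k - 1))
      = ∑ k ∈ Finset.range n, (n.factorial / k.factorial : ℝ) * x ^ k := by
    rw [Finset.sum_range_succ']
    simp only [CharP.cast_eq_zero, zero_mul, mul_zero, add_zero, add_tsub_cancel_right]
    refine Finset.sum_congr rfl fun k _ => ?_
    rw [Nat.factorial_succ]
    push_cast
    field_simp
  refine ((hasDerivAt_neg x).exp.mul hsum).neg.congr_deriv ?_
  rw [hderiv, Finset.sum_range_succ, Nat.cast_ne_zero.mpr n.factorial_ne_zero |> div_self]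
  ring

lemma integral_Ioi_pow_mul_exp_neg (n : ℕ) (t : ℝ) :
    ∫ u in Ioi t, u ^ n * exp (-u)
      = exp (-t) * ∑ k ∈ Finset.range (n + 1), (n.factorial / k.factorial : ℝ) * t ^ k := by
  have hint : IntegrableOn (fun u : ℝ => u ^ n * exp (-u)) (Ioi t) := by
    simpa using integrableOn_pow_mul_exp_neg_mul_Ioi n one_pos t
  have hlim : Tendsto (fun x => -(exp (-x) * ∑ k ∈ Finset.range (n + 1),
      (n.factorial / k.factorial : ℝ) * x ^ k)) atTop (nhds 0) := by
    have h := (tendsto_finsetSum (Finset.range (n + 1)) fun k _ =>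
      (tendsto_pow_mul_exp_neg_atTop_nhds_zero k).const_mul
        (n.factorial / k.factorial : ℝ)).neg
    simp only [mul_zero, Finset.sum_const_zero, neg_zero] at h
    refine h.congr fun x => ?_
    rw [Finset.mul_sum]
    exact congrArg _ (Finset.sum_congr rfl fun k _ => by ring)
  rw [integral_Ioi_of_hasDerivAt_of_tendsto' (fun x _ => hasDerivAt_neg_exp_neg_mul_sum n x)
    hint hlim]
  ring

lemma integral_Ioi_pow_mul_exp_neg_mul (n : ℕ) {A : ℝ} (hA : 0 < A) (T : ℝ) :
    ∫ y in Ioi T, y ^ n * exp (-(A * y))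
      = (A ^ (n + 1))⁻¹ * ∫ u in Ioi (A * T), u ^ n * exp (-u) := by
  calc ∫ y in Ioi T, y ^ n * exp (-(A * y))
      = (A ^ n)⁻¹ * ∫ y in Ioi T, (A * y) ^ n * exp (-(A * y)) := by
        rw [← integral_const_mul]
        refine setIntegral_congr_fun measurableSet_Ioi fun y _ => ?_
        field_simp
        ring
    _ = (A ^ n)⁻¹ * (A⁻¹ * ∫ u in Ioi (A * T), u ^ n * exp (-u)) := by
        rw [integral_comp_mul_left_Ioi (fun u => u ^ n * exp (-u)) T hA, smul_eq_mul]
    _ = (A ^ (n + 1))⁻¹ * ∫ u in Ioi (A * T), u ^ n * exp (-u) := by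
        rw [pow_succ, mul_inv, mul_assoc]

lemma nakDensity_of_pos (m : ℕ) {x : ℝ} (hx : 0 < x) :
    nakDensity m x = (m : ℝ) ^ m / Gamma m * (x ^ (m - 1) * exp (-(m * x))) := by
  rw [nakDensity, if_pos hx, mul_assoc]

lemma nakDensity_nonneg (m : ℕ) (x : ℝ) : 0 ≤ nakDensity m x := by
  unfold nakDensity
  split_ifs
  · have := Gamma_nonneg_of_nonneg (Nat.cast_nonneg (α := ℝ) m)
    positivity
  · rfl

@[fun_prop]
lemma measurable_nakDensity (m : ℕ) : Measurable (nakDensity m) :=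
  Measurable.ite measurableSet_Ioi (by fun_prop) measurable_const

/-- The Erlang form of the tail `∫ x in Ioi s, nakDensity m x`; the two agree only for `0 ≤ s`. -/
noncomputable def nakTail (m : ℕ) (s : ℝ) : ℝ :=
  exp (-(m * s)) * ∑ p ∈ Finset.range m, (m * s) ^ p / p.factorial

@[fun_prop]
lemma measurable_nakTail (m : ℕ) : Measurable (nakTail m) := by
  unfold nakTail
  fun_prop

lemma nakTail_nonneg (m : ℕ) {s : ℝ} (hs : 0 ≤ s) : 0 ≤ nakTail m s := by
  unfold nakTail
  positivity

lemma integrableOn_nakDensity_Ioi {m : ℕ} (hm : 0 < m) {s : ℝ} (hs : 0 ≤ s) :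
    IntegrableOn (nakDensity m) (Ioi s) :=
  (integrableOn_congr_fun (fun _ hx => nakDensity_of_pos m (hs.trans_lt hx))
    measurableSet_Ioi).mpr
    ((integrableOn_pow_mul_exp_neg_mul_Ioi _ (Nat.cast_pos.mpr hm) s).const_mul _)

lemma integral_Ioi_nakDensity {m : ℕ} (hm : 0 < m) {s : ℝ} (hs : 0 ≤ s) :
    ∫ x in Ioi s, nakDensity m x = nakTail m s := by
  obtain ⟨n, rfl⟩ := Nat.exists_eq_add_one_of_ne_zero hm.ne'
  have hΓ : Gamma ((n + 1 : ℕ) : ℝ) = n.factorial := by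
    rw [Nat.cast_add_one, Gamma_nat_eq_factorial]
  rw [setIntegral_congr_fun measurableSet_Ioi fun x hx => nakDensity_of_pos _ (hs.trans_lt hx),
    integral_const_mul, Nat.add_sub_cancel,
    integral_Ioi_pow_mul_exp_neg_mul n (Nat.cast_pos.mpr hm), integral_Ioi_pow_mul_exp_neg,
    nakTail, hΓ, Finset.mul_sum, Finset.mul_sum, Finset.mul_sum, Finset.mul_sum]
  refine Finset.sum_congr rfl fun k _ => ?_
  field_simp

lemma withDensity_nakDensity_Ioi {m : ℕ} (hm : 0 < m) {s : ℝ} (hs : 0 ≤ s) :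
    volume.withDensity (fun x => ENNReal.ofReal (nakDensity m x)) (Ioi s)
      = ENNReal.ofReal (nakTail m s) := by
  rw [withDensity_apply _ measurableSet_Ioi, ← integral_Ioi_nakDensity hm hs,
    ofReal_integral_eq_lintegral_ofReal (integrableOn_nakDensity_Ioi hm hs)
      (ae_of_all _ (nakDensity_nonneg m))]

lemma nakDensity_mul_nakTail_affine (m : ℕ) (α β : ℝ) {y : ℝ} (hy : 0 < y) :
    nakDensity m y * nakTail m (α * y + β)
      = ∑ p ∈ Finset.range m, ∑ r ∈ Finset.range (p + 1),
          (m : ℝ) ^ m / Gamma m * (p.choose r * (m * α) ^ r * (m * β) ^ (p - r) / p.factorial) *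
            exp (-(m * β)) * (y ^ (r + (m - 1)) * exp (-(m * (1 + α) * y))) := by
  have hexp : exp (-(m * y)) * exp (-(m * α * y + m * β))
      = exp (-(m * β)) * exp (-(m * (1 + α) * y)) := by
    rw [← exp_add, ← exp_add]
    ring_nf
  rw [nakDensity_of_pos m hy, nakTail, Finset.mul_sum, Finset.mul_sum]
  refine Finset.sum_congr rfl fun p _ => ?_
  rw [show (m : ℝ) * (α * y + β) = m * α * y + m * β by ring, add_pow, Finset.sum_div,
    Finset.mul_sum, Finset.mul_sum]
  refine Finset.sum_congr rfl fun r _ => ?_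
  linear_combination (m : ℝ) ^ m / Gamma m *
    (p.choose r * (m * α) ^ r * (m * β) ^ (p - r) / p.factorial) * y ^ (r + (m - 1)) * hexp

lemma integrableOn_nakDensity_mul_nakTail_affine {m : ℕ} (hm : 0 < m) {α : ℝ} (hα : 0 < 1 + α)
    (β : ℝ) {T : ℝ} (hT : 0 ≤ T) :
    IntegrableOn (fun y => nakDensity m y * nakTail m (α * y + β)) (Ioi T) := by
  have hA : 0 < (m : ℝ) * (1 + α) := mul_pos (Nat.cast_pos.mpr hm) hα
  refine (integrableOn_congr_fun
    (fun y hy => nakDensity_mul_nakTail_affine m α β (hT.trans_lt hy)) measurableSet_Ioi).mpr ?_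
  exact integrable_finsetSum _ fun p _ => integrable_finsetSum _ fun r _ =>
    (integrableOn_pow_mul_exp_neg_mul_Ioi _ hA T).const_mul _

lemma integral_Ioi_nakDensity_mul_nakTail_affine {m : ℕ} (hm : 0 < m) {α : ℝ} (hα : 0 < 1 + α)
    (β : ℝ) {T : ℝ} (hT : 0 ≤ T) :
    ∫ y in Ioi T, nakDensity m y * nakTail m (α * y + β)
      = ∑ p ∈ Finset.range m, ∑ r ∈ Finset.range (p + 1),
          p.choose r * α ^ r * (m * β) ^ (p - r) / (Gamma m * p.factorial) * exp (-(m * β)) *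
            ((1 + α) ^ (r + m))⁻¹ *
              ∫ u in Ioi (m * (1 + α) * T), u ^ (r + m - 1) * exp (-u) := by
  have hA : 0 < (m : ℝ) * (1 + α) := mul_pos (Nat.cast_pos.mpr hm) hα
  have hint : ∀ k c, IntegrableOn (fun y => c * (y ^ k * exp (-(m * (1 + α) * y)))) (Ioi T) :=
    fun k c => (integrableOn_pow_mul_exp_neg_mul_Ioi k hA T).const_mul c
  rw [setIntegral_congr_fun measurableSet_Ioi
      fun y hy => nakDensity_mul_nakTail_affine m α β (hT.trans_lt hy),
    integral_finsetSum _ fun p _ => integrable_finsetSum _ fun r _ => hint _ _]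
  refine Finset.sum_congr rfl fun p _ => ?_
  rw [integral_finsetSum _ fun r _ => hint _ _]
  refine Finset.sum_congr rfl fun r _ => ?_
  have hΓ : 0 < Gamma m := Gamma_pos_of_pos (Nat.cast_pos.mpr hm)
  rw [integral_const_mul, integral_Ioi_pow_mul_exp_neg_mul _ hA,
    show r + (m - 1) + 1 = r + m by omega, show r + (m - 1) = r + m - 1 by omega,
    mul_pow _ (1 + α)]
  field_simp
  ring

lemma prod_setOf_lt_snd_and_lt_fst {μ ν : Measure ℝ} [SFinite μ] [SFinite ν] {g : ℝ → ℝ}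
    (hg : Measurable g) (T : ℝ) :
    (μ.prod ν) {q | T < q.2 ∧ g q.2 < q.1} = ∫⁻ y in Ioi T, μ (Ioi (g y)) ∂ν := by
  have hS : MeasurableSet {q : ℝ × ℝ | T < q.2 ∧ g q.2 < q.1} :=
    (measurableSet_lt measurable_const measurable_snd).inter
      (measurableSet_lt (hg.comp measurable_snd) measurable_fst)
  rw [Measure.prod_apply_symm hS, ← lintegral_indicator measurableSet_Ioi]
  refine lintegral_congr fun y => ?_
  by_cases hy : T < y
  · rw [indicator_of_mem (show y ∈ Ioi T from hy)]
    congr 1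
    ext x
    simp [hy]
  · rw [indicator_of_notMem (show y ∉ Ioi T from hy)]
    simp [hy]

lemma toReal_measure_lt_and_affine_lt {Ω : Type*} [MeasureSpace Ω]
    [IsProbabilityMeasure (ℙ : Measure Ω)] {m : ℕ} (hm : 0 < m) {X Y : Ω → ℝ}
    (hX : Measurable X) (hY : Measurable Y)
    (hXlaw : Measure.map X ℙ = volume.withDensity (fun x => ENNReal.ofReal (nakDensity m x)))
    (hYlaw : Measure.map Y ℙ = volume.withDensity (fun x => ENNReal.ofReal (nakDensity m x)))
    (hindep : IndepFun X Y ℙ) {α β T : ℝ} (hα : 0 ≤ α) (hβ : 0 ≤ β) (hT : 0 ≤ T) :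
    (ℙ {ω | T < Y ω ∧ α * Y ω + β < X ω}).toReal
      = ∫ y in Ioi T, nakDensity m y * nakTail m (α * y + β) := by
  set ν := volume.withDensity (fun x => ENNReal.ofReal (nakDensity m x))
  have hS : MeasurableSet {q : ℝ × ℝ | T < q.2 ∧ α * q.2 + β < q.1} :=
    (measurableSet_lt measurable_const measurable_snd).inter
      (measurableSet_lt (by fun_prop) measurable_fst)
  have harg : ∀ y ∈ Ioi T, 0 ≤ α * y + β := fun y hy =>
    add_nonneg (mul_nonneg hα (hT.trans hy.le)) hβ
  have hint : IntegrableOn (fun y => nakDensity m y * nakTail m (α * y + β)) (Ioi T) :=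
    integrableOn_nakDensity_mul_nakTail_affine hm (by linarith) β hT
  have hnn : ∀ y ∈ Ioi T, 0 ≤ nakDensity m y * nakTail m (α * y + β) := fun y hy =>
    mul_nonneg (nakDensity_nonneg m y) (nakTail_nonneg m (harg y hy))
  have hprob : ℙ {ω | T < Y ω ∧ α * Y ω + β < X ω}
      = ENNReal.ofReal (∫ y in Ioi T, nakDensity m y * nakTail m (α * y + β)) :=
    calc ℙ {ω | T < Y ω ∧ α * Y ω + β < X ω}
        = Measure.map (fun ω => (X ω, Y ω)) ℙ {q | T < q.2 ∧ α * q.2 + β < q.1} :=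
          (Measure.map_apply (hX.prodMk hY) hS).symm
      _ = (ν.prod ν) {q | T < q.2 ∧ α * q.2 + β < q.1} := by
          rw [(indepFun_iff_map_prod_eq_prod_map_map hX.aemeasurable hY.aemeasurable).mp hindep,
            hXlaw, hYlaw]
      _ = ∫⁻ y in Ioi T, ENNReal.ofReal (nakTail m (α * y + β)) ∂ν := by
          rw [prod_setOf_lt_snd_and_lt_fst (g := fun y => α * y + β) (by fun_prop)]
          exact setLIntegral_congr_fun measurableSet_Ioi fun y hy =>
            withDensity_nakDensity_Ioi hm (harg y hy)
      _ = ∫⁻ y in Ioi T, ENNReal.ofReal (nakDensity m y * nakTail m (α * y + β)) := by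
          rw [setLIntegral_withDensity_eq_setLIntegral_mul _ (by fun_prop) (by fun_prop)
            measurableSet_Ioi]
          exact setLIntegral_congr_fun measurableSet_Ioi fun y _ =>
            (ENNReal.ofReal_mul (nakDensity_nonneg m y)).symm
      _ = _ := (ofReal_integral_eq_lintegral_ofReal hint
          ((ae_restrict_iff' measurableSet_Ioi).mpr (ae_of_all _ hnn))).symm
  rw [hprob, ENNReal.toReal_ofReal (setIntegral_nonneg measurableSet_Ioi hnn)]

/-- Theorem 4 (success probability): joint probability of SIC success and far-user SINR success. -/
theorem stmt_16 {Ω : Type*} [MeasureSpace Ω] [IsProbabilityMeasure (ℙ : Measure Ω)]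
    (m : ℕ) (hm : 0 < m) (hc hr : Ω → ℝ) (hcm : Measurable hc) (hrm : Measurable hr)
    (hclaw : Measure.map hc ℙ = volume.withDensity (fun x => ENNReal.ofReal (nakDensity m x)))
    (hrlaw : Measure.map hr ℙ = volume.withDensity (fun x => ENNReal.ofReal (nakDensity m x)))
    (hindep : IndepFun hc hr ℙ)
    (Pc Pr a1 a2 a3 a4 a5 γSIC γth : ℝ)
    (hPc : 0 < Pc) (hPr : 0 < Pr) (ha1 : 0 < a1) (ha2 : 0 < a2) (ha3 : 0 < a3)
    (ha4 : 0 < a4) (ha5 : 0 < a5) (hγS : 0 < γSIC) (hγ : 0 < γth) :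
    (ℙ {ω | γSIC < Pc * hc ω / (Pr * a3 * hr ω + a1 + a2) ∧
            γth < Pr * hr ω / (a4 + a5)}).toReal =
      ∑ p ∈ Finset.range m, ∑ r ∈ Finset.range (p + 1),
        (Nat.choose p r : ℝ) * (a1 + a2) ^ (p - r) * (a3 * Pr) ^ r /
            (Real.Gamma m * (m : ℝ) ^ r * Nat.factorial p) *
          (m * γSIC / Pc) ^ p * Real.exp (-(m * γSIC * (a1 + a2) / Pc)) *
          (γSIC * a3 * Pr / Pc + 1) ^ (-((r : ℝ) + (m : ℝ))) *
          ∫ u in Ioi ((γth * m * (a4 + a5) / Pr) * (γSIC * a3 * Pr / Pc + 1)),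
            u ^ (r + m - 1) * Real.exp (-u) := by
  set α := γSIC * a3 * Pr / Pc
  set β := γSIC * (a1 + a2) / Pc
  set T := γth * (a4 + a5) / Pr
  have hevent : {ω | γSIC < Pc * hc ω / (Pr * a3 * hr ω + a1 + a2) ∧
      γth < Pr * hr ω / (a4 + a5)} = {ω | T < hr ω ∧ α * hr ω + β < hc ω} := by
    ext ω
    rw [mem_ofPred_eq, mem_ofPred_eq, and_comm, lt_div_iff₀ (by positivity), div_lt_iff₀' hPr]
    refine and_congr_right fun hT => ?_
    have hr_pos : 0 < hr ω :=
      pos_of_mul_pos_right ((by positivity : 0 < γth * (a4 + a5)).trans hT) hPr.le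
    rw [lt_div_iff₀ (by positivity),
      show α * hr ω + β = γSIC * (Pr * a3 * hr ω + a1 + a2) / Pc by ring, div_lt_iff₀ hPc,
      mul_comm (hc ω)]
  rw [hevent, toReal_measure_lt_and_affine_lt hm hcm hrm hclaw hrlaw hindep (by positivity)
      (by positivity) (by positivity),
    integral_Ioi_nakDensity_mul_nakTail_affine hm (by positivity) β (by positivity)]
  refine Finset.sum_congr rfl fun p _ => Finset.sum_congr rfl fun r hr => ?_
  have hrp : r ≤ p := Nat.lt_succ_iff.mp (Finset.mem_range.mp hr)
  have hbound : (m : ℝ) * (1 + α) * T = γth * m * (a4 + a5) / Pr * (α + 1) := by ring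
  rw [hbound, add_comm 1 α, ← Nat.cast_add, Real.rpow_neg (by positivity), Real.rpow_natCast,
    ← pow_mul_pow_sub _ hrp, show (m : ℝ) * β = m * γSIC / Pc * (a1 + a2) by ring,
    mul_pow (m * γSIC / Pc) (a1 + a2)]
  simp only [α]
  field_simp
  ring
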